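/- arXiv:1808.06712 — 3 statements merged into one kernel-verified Lean document; each statement's English description precedes it below -/
import Mathlib

section
/- For any family {X_s}_{s∈S} of topological spaces, subsets A_s ⊆ X_s, and natural number n ≥ 1, the n-fold iterated θ-closure of the product ∏_{s∈S} A_s in the product space equals the product of the n-fold iterated θ-closures: cl_θⁿ(∏_{s∈S} A_s) = ∏_{s∈S} cl_θⁿ(A_s). -/
/-!
A basic neighbourhood of a point of the product contains a box `∏ₛ Uₛ`, and the closure of a box
is the box of closures; so a point of `∏ₛ cl_θ(Aₛ)` is θ-adherent to `∏ₛ Aₛ` by choosing, for each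
coordinate separately, a point of `cl(Uₛ) ∩ Aₛ`. Conversely the projections are continuous, and
continuous maps carry θ-closures into θ-closures of images. Iterating the one-step identity gives
the theorem for every `n`.
-/

open Set Topology Cardinal

universe u v

def thetaCl (X : Type u) [TopologicalSpace X] (A : Set X) : Set X :=
  {x | ∀ U : Set X, IsOpen U → x ∈ U → (closure U ∩ A).Nonempty}

def thetaClN (X : Type u) [TopologicalSpace X] (n : ℕ) (A : Set X) : Set X :=
  (thetaCl X)^[n] A

def gammaCl (X : Type u) [TopologicalSpace X] (n : ℕ) (A : Set X) : Set X :=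
  {x | ∀ U : Set X, IsOpen U → x ∈ U → (thetaClN X n U ∩ A).Nonempty}

def ThetaUrysohn (X : Type u) [TopologicalSpace X] (n : ℕ) : Prop :=
  ∀ x y : X, x ≠ y → ∃ U V : Set X, IsOpen U ∧ IsOpen V ∧ x ∈ U ∧ y ∈ V ∧
    thetaClN X n U ∩ thetaClN X n V = ∅

section ThetaClosure

variable {X Y : Type*} [TopologicalSpace X] [TopologicalSpace Y]

lemma mem_thetaCl_iff_nhds {A : Set X} {x : X} :
    x ∈ thetaCl X A ↔ ∀ U ∈ 𝓝 x, (closure U ∩ A).Nonempty := by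
  refine ⟨fun hx U hU => ?_, fun hx U hUo hxU => hx U (hUo.mem_nhds hxU)⟩
  obtain ⟨V, hVU, hVo, hxV⟩ := mem_nhds_iff.mp hU
  exact (hx V hVo hxV).mono (inter_subset_inter_left _ (closure_mono hVU))

lemma thetaCl_mono {A B : Set X} (hAB : A ⊆ B) : thetaCl X A ⊆ thetaCl X B :=
  fun _ hx U hU hxU => (hx U hU hxU).mono (inter_subset_inter_right _ hAB)

lemma Continuous.mapsTo_thetaCl {f : X → Y} (hf : Continuous f) (A : Set X) :
    MapsTo f (thetaCl X A) (thetaCl Y (f '' A)) := by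
  intro x hx U hU hxU
  obtain ⟨y, hyU, hyA⟩ := hx _ (hU.preimage hf) hxU
  exact ⟨f y, hf.closure_preimage_subset U hyU, mem_image_of_mem f hyA⟩

end ThetaClosure

section Pi

variable {ι : Type*} {X : ι → Type*} [∀ i, TopologicalSpace (X i)]

lemma thetaCl_pi_subset (A : ∀ i, Set (X i)) :
    thetaCl (∀ i, X i) (univ.pi A) ⊆ univ.pi fun i => thetaCl (X i) (A i) :=
  fun _ hx i _ => thetaCl_mono eval_image_univ_pi_subset
    ((continuous_apply i).mapsTo_thetaCl _ hx)

lemma pi_thetaCl_subset (A : ∀ i, Set (X i)) :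
    (univ.pi fun i => thetaCl (X i) (A i)) ⊆ thetaCl (∀ i, X i) (univ.pi A) := by
  intro x hx
  rw [mem_thetaCl_iff_nhds]
  intro U hU
  rw [nhds_pi, Filter.mem_pi] at hU
  obtain ⟨I, -, t, ht, hIU⟩ := hU
  have hbox : univ.pi t ⊆ U := (pi_mono' (fun _ _ => Subset.rfl) (subset_univ I)).trans hIU
  choose a ha using fun i => mem_thetaCl_iff_nhds.mp (hx i trivial) (t i) (ht i)
  refine ⟨a, closure_mono hbox ?_, fun i _ => (ha i).2⟩
  rw [closure_pi_set]
  exact fun i _ => (ha i).1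

lemma thetaCl_pi (A : ∀ i, Set (X i)) :
    thetaCl (∀ i, X i) (univ.pi A) = univ.pi fun i => thetaCl (X i) (A i) :=
  (thetaCl_pi_subset A).antisymm (pi_thetaCl_subset A)

end Pi

theorem thetaClN_pi_general {S : Type u} (X : S → Type v) [∀ s, TopologicalSpace (X s)]
    (A : ∀ s, Set (X s)) (n : ℕ) :
    thetaClN (∀ s, X s) n (Set.univ.pi A) =
      Set.univ.pi (fun s => thetaClN (X s) n (A s)) := by
  induction n with
  | zero => rfl
  | succ n ih =>
    simp only [thetaClN, Function.iterate_succ_apply'] at ih ⊢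
    rw [ih, thetaCl_pi]

theorem thetaClN_pi {S : Type u} (X : S → Type v) [∀ s, TopologicalSpace (X s)]
    (A : ∀ s, Set (X s)) (n : ℕ) (hn : 1 ≤ n) :
    thetaClN (∀ s, X s) n (Set.univ.pi A) =
      Set.univ.pi (fun s => thetaClN (X s) n (A s)) :=
  thetaClN_pi_general X A n
end

section
/- A topological space X is θ¹-Urysohn if and only if X is a Urysohn space. -/
open Set Topology Cardinal

universe u v

/-- For open `U`, the set `closure W ∩ U` is nonempty iff `W ∩ U` is. -/
theorem thetaCl_eq_closure_of_isOpen {X : Type u} [TopologicalSpace X] {U : Set X}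
    (hU : IsOpen U) : thetaCl X U = closure U := by
  ext x
  simp only [thetaCl, mem_ofPred_eq, closure_inter_open_nonempty_iff hU, mem_closure_iff]

theorem thetaClN_one_eq_closure_of_isOpen {X : Type u} [TopologicalSpace X] {U : Set X}
    (hU : IsOpen U) : thetaClN X 1 U = closure U := by
  rw [thetaClN, Function.iterate_one, thetaCl_eq_closure_of_isOpen hU]

theorem thetaUrysohn_one_iff_urysohn (X : Type u) [TopologicalSpace X] :
    ThetaUrysohn X 1 ↔
      ∀ x y : X, x ≠ y → ∃ U V : Set X, IsOpen U ∧ IsOpen V ∧ x ∈ U ∧ y ∈ V ∧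
        closure U ∩ closure V = ∅ := by
  unfold ThetaUrysohn
  refine forall₃_congr fun x y _ => exists₂_congr fun U V => ?_
  constructor <;> rintro ⟨hU, hV, hxU, hyV, hdisj⟩ <;> refine ⟨hU, hV, hxU, hyV, ?_⟩
  · rwa [thetaClN_one_eq_closure_of_isOpen hU, thetaClN_one_eq_closure_of_isOpen hV] at hdisj
  · rwa [thetaClN_one_eq_closure_of_isOpen hU, thetaClN_one_eq_closure_of_isOpen hV]
end

section
/- A topological space X is θⁿ-Urysohn if and only if the diagonal Δ_X = {(x,x) : x ∈ X} is n-γ-closed in X × X, i.e., cl_γⁿ(Δ_X) = Δ_X in the product space X × X. -/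
/-! The θⁿ-closure of a box is the box of the θⁿ-closures, and boxes form a base of `X × X`.
Hence `(x, y)` lies in the n-γ-closure of the diagonal exactly when the θⁿ-closures of any two
open neighbourhoods of `x` and `y` meet, which is the negation of θⁿ-Urysohn separation. -/

open Set Topology Cardinal

universe u v

section

variable {X : Type u} {Y : Type v} [TopologicalSpace X] [TopologicalSpace Y]

lemma subset_thetaCl (A : Set X) : A ⊆ thetaCl X A :=
  fun x hx _ _ hxU => ⟨x, subset_closure hxU, hx⟩

lemma thetaCl_mono_s11 : Monotone (thetaCl X) :=
  fun _ _ hAB _ hx U hU hxU => (hx U hU hxU).mono (inter_subset_inter_right _ hAB)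

lemma subset_thetaClN (n : ℕ) (A : Set X) : A ⊆ thetaClN X n A :=
  Function.id_le_iterate_of_id_le subset_thetaCl n A

lemma thetaClN_mono (n : ℕ) : Monotone (thetaClN X n) :=
  thetaCl_mono_s11.iterate n

lemma subset_gammaCl (n : ℕ) (A : Set X) : A ⊆ gammaCl X n A :=
  fun x hx U _ hxU => ⟨x, subset_thetaClN n U hxU, hx⟩

lemma thetaCl_prod (A : Set X) (B : Set Y) :
    thetaCl (X × Y) (A ×ˢ B) = thetaCl X A ×ˢ thetaCl Y B := by
  ext p
  constructor
  · intro hp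
    constructor
    · intro U hU hpU
      obtain ⟨q, hq, hqA, -⟩ := hp (U ×ˢ (univ : Set Y)) (hU.prod isOpen_univ) ⟨hpU, trivial⟩
      rw [closure_prod_eq] at hq
      exact ⟨q.1, hq.1, hqA⟩
    · intro V hV hpV
      obtain ⟨q, hq, -, hqB⟩ := hp ((univ : Set X) ×ˢ V) (isOpen_univ.prod hV) ⟨trivial, hpV⟩
      rw [closure_prod_eq] at hq
      exact ⟨q.2, hq.2, hqB⟩
  · rintro ⟨hA, hB⟩ W hW hpW
    obtain ⟨U, V, hU, hV, hpU, hpV, hUVW⟩ := isOpen_prod_iff.mp hW p.1 p.2 hpW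
    obtain ⟨a, haU, haA⟩ := hA U hU hpU
    obtain ⟨b, hbV, hbB⟩ := hB V hV hpV
    have hab : (a, b) ∈ closure (U ×ˢ V) := by
      rw [closure_prod_eq]
      exact ⟨haU, hbV⟩
    exact ⟨(a, b), closure_mono hUVW hab, haA, hbB⟩

lemma thetaClN_prod (n : ℕ) (A : Set X) (B : Set Y) :
    thetaClN (X × Y) n (A ×ˢ B) = thetaClN X n A ×ˢ thetaClN Y n B := by
  induction n with
  | zero => rfl
  | succ k ih =>
    simp only [thetaClN, Function.iterate_succ_apply'] at ih ⊢
    rw [ih, thetaCl_prod]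

lemma mem_gammaCl_diagonal_iff (n : ℕ) (x y : X) :
    (x, y) ∈ gammaCl (X × X) n {p : X × X | p.1 = p.2} ↔
      ∀ U V : Set X, IsOpen U → IsOpen V → x ∈ U → y ∈ V →
        (thetaClN X n U ∩ thetaClN X n V).Nonempty := by
  constructor
  · intro h U V hU hV hxU hyV
    obtain ⟨q, hq, hq_diag⟩ := h (U ×ˢ V) (hU.prod hV) ⟨hxU, hyV⟩
    rw [thetaClN_prod] at hq
    exact ⟨q.1, hq.1, hq_diag ▸ hq.2⟩
  · intro h W hW hxyW
    obtain ⟨U, V, hU, hV, hxU, hyV, hUVW⟩ := isOpen_prod_iff.mp hW x y hxyW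
    obtain ⟨z, hzU, hzV⟩ := h U V hU hV hxU hyV
    have hzz : (z, z) ∈ thetaClN (X × X) n (U ×ˢ V) := by
      rw [thetaClN_prod]
      exact ⟨hzU, hzV⟩
    exact ⟨(z, z), thetaClN_mono n hUVW hzz, rfl⟩

end

theorem thetaUrysohn_iff_diagonal_gammaClosed (X : Type u) [TopologicalSpace X] (n : ℕ) :
    ThetaUrysohn X n ↔
      gammaCl (X × X) n {p : X × X | p.1 = p.2} = {p : X × X | p.1 = p.2} := by
  rw [Subset.antisymm_iff, and_iff_left (subset_gammaCl n _), ThetaUrysohn]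
  simp only [subset_def, Prod.forall, mem_gammaCl_diagonal_iff]
  refine forall₂_congr fun x y => ?_
  rw [not_imp_comm]
  simp only [← not_nonempty_iff_eq_empty, not_exists, not_and, not_not]
  rfl
end
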